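/- arXiv:2506.16864 — 2 statements merged into one kernel-verified Lean document; each statement's English description precedes it below -/
import Mathlib

section
/- Let K₄ be the complete graph on four vertices, let B be a connected simple graph with at least three vertices, and let f : V(K₄) → V(B) be a function such that the Sierpiński product K₄ ⊗_f B is 3-connected. Then f is injective. -/
/-!
If `f a₁ = f a₂ = b` with `a₁ ≠ a₂`, the only edges leaving the fibres over `{a₁, a₂}` end in
the two vertices `(a₃, b)` and `(a₄, b)` over the other two vertices of `K₄`. Deleting these two
vertices separates the fibres over `{a₁, a₂}` from a vertex `(a₃, c)` with `c ≠ b`, so the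
product is not `3`-connected.
-/

/-- The Sierpiński product of simple graphs `A` and `B` with respect to `f : V(A) → V(B)`:
vertices are pairs `(a, b)`; two vertices are adjacent iff they lie in the same fibre and
their second coordinates are adjacent in `B`, or their first coordinates are adjacent in `A`
and the second coordinates are given by `f` applied to the other first coordinate. -/
def SierpinskiProd {α β : Type*} (A : SimpleGraph α) (B : SimpleGraph β)
    (f : α → β) : SimpleGraph (α × β) where
  Adj p q := (p.1 = q.1 ∧ B.Adj p.2 q.2) ∨
    (A.Adj p.1 q.1 ∧ p.2 = f q.1 ∧ q.2 = f p.1)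
  symm := ⟨by
    rintro ⟨a₁, b₁⟩ ⟨a₂, b₂⟩ (⟨h, hB⟩ | ⟨hA, h₁, h₂⟩)
    · exact Or.inl ⟨h.symm, hB.symm⟩
    · exact Or.inr ⟨hA.symm, h₂, h₁⟩⟩
  loopless := ⟨by
    rintro ⟨a, b⟩ (⟨_, hB⟩ | ⟨hA, _, _⟩)
    · exact B.loopless.irrefl b hB
    · exact A.loopless.irrefl a hA⟩

/-- A vertex `v` of a graph `G` is a separating vertex if deleting `v` (taking the induced
subgraph on the remaining vertices) yields a graph that is not connected. -/
def IsSeparatingVertex {V : Type*} (G : SimpleGraph V) (v : V) : Prop :=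
  ¬ (G.induce ({v}ᶜ : Set V)).Connected

/-- A graph `G` is `k`-connected if it has more than `k` vertices and deleting any set of
fewer than `k` vertices leaves a connected graph. -/
def KConnected {V : Type*} [Fintype V] (k : ℕ) (G : SimpleGraph V) : Prop :=
  k < Fintype.card V ∧ ∀ S : Set V, S.ncard < k → (G.induce Sᶜ).Connected

/-- `W` is a cut-set of `G` if deleting all vertices of `W` strictly increases the number of
connected components. -/
def IsCutSet {V : Type*} (G : SimpleGraph V) (W : Set V) : Prop :=
  Nat.card G.ConnectedComponent < Nat.card (G.induce Wᶜ).ConnectedComponent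

/-- `W` is a minimal cut-set of `G` if it is a cut-set and no proper subset is a cut-set. -/
def IsMinCutSet {V : Type*} (G : SimpleGraph V) (W : Set V) : Prop :=
  IsCutSet G W ∧ ∀ W' ⊂ W, ¬ IsCutSet G W'

namespace SimpleGraph

theorem Reachable.of_adj_closed {V : Type*} {G : SimpleGraph V} {P : V → Prop}
    (hP : ∀ u v, G.Adj u v → P u → P v) {u v : V} (huv : G.Reachable u v) (hu : P u) : P v := by
  obtain ⟨w⟩ := huv
  induction w with
  | nil => exact hu
  | cons hadj _ ih => exact ih (hP _ _ hadj hu)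

end SimpleGraph

namespace SierpinskiProd

variable {α β : Type*} {A : SimpleGraph α} {B : SimpleGraph β} {f : α → β}

theorem fst_eq_or_snd_eq_of_adj {p q : α × β} (h : (SierpinskiProd A B f).Adj p q) :
    q.1 = p.1 ∨ q.2 = f p.1 := by
  rcases h with ⟨heq, _⟩ | ⟨_, _, hq⟩
  · exact Or.inl heq.symm
  · exact Or.inr hq

theorem not_preconnected_induce_compl_prod_image {X : Set α} {a a' : α} {c : β}
    (ha : a ∈ X) (ha' : a' ∉ X) (hc : c ∉ f '' X) :
    ¬ ((SierpinskiProd A B f).induce (Xᶜ ×ˢ (f '' X))ᶜ).Preconnected := by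
  set S : Set (α × β) := Xᶜ ×ˢ (f '' X)
  have hac : (a, c) ∈ Sᶜ := fun h => h.1 ha
  have ha'c : (a', c) ∈ Sᶜ := fun h => hc h.2
  have hclosed : ∀ p q : ↥Sᶜ, ((SierpinskiProd A B f).induce Sᶜ).Adj p q →
      (p : α × β).1 ∈ X → (q : α × β).1 ∈ X := by
    intro p q hpq hp
    by_contra hq
    rcases fst_eq_or_snd_eq_of_adj hpq with heq | hsnd
    · exact hq (heq ▸ hp)
    · exact q.2 ⟨hq, hsnd ▸ Set.mem_image_of_mem f hp⟩
  intro hconn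
  exact ha' ((hconn ⟨_, hac⟩ ⟨_, ha'c⟩).of_adj_closed hclosed ha)

end SierpinskiProd

theorem sierpinski_K4_injective_general {β : Type*} [Fintype β]
    (B : SimpleGraph β) (hcardB : 3 ≤ Fintype.card β)
    (f : Fin 4 → β)
    (h3 : KConnected 3 (SierpinskiProd (SimpleGraph.completeGraph (Fin 4)) B f)) :
    Function.Injective f := by
  intro a₁ a₂ hf
  by_contra ha
  set X : Set (Fin 4) := {a₁, a₂}
  have himage : f '' X = {f a₁} := by rw [Set.image_pair, hf, Set.pair_eq_singleton]
  have hXc : Xᶜ.ncard = 2 := by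
    rw [Set.ncard_compl, Set.ncard_pair ha, Nat.card_eq_fintype_card, Fintype.card_fin]
  have hS : (Xᶜ ×ˢ (f '' X)).ncard < 3 := by
    rw [Set.ncard_prod, hXc, himage, Set.ncard_singleton]
    omega
  obtain ⟨a', ha'⟩ : Xᶜ.Nonempty := Set.nonempty_of_ncard_ne_zero (by omega)
  obtain ⟨c, hc⟩ := Fintype.exists_ne_of_one_lt_card (by omega) (f a₁)
  exact SierpinskiProd.not_preconnected_induce_compl_prod_image
    (Set.mem_insert a₁ _) ha' (by rwa [himage]) (h3.2 _ hS).preconnected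

/-- **Proposition (part).** If `K₄ ⊗_f B` is `3`-connected, with `B` connected on at least
three vertices, then `f` is injective. -/
theorem sierpinski_K4_injective {β : Type*} [Fintype β]
    (B : SimpleGraph β) (hB : B.Connected) (hcardB : 3 ≤ Fintype.card β)
    (f : Fin 4 → β)
    (h3 : KConnected 3 (SierpinskiProd (SimpleGraph.completeGraph (Fin 4)) B f)) :
    Function.Injective f :=
  sierpinski_K4_injective_general B hcardB f h3
end

section
/- Let K₄ be the complete graph on four vertices, let B be a connected simple graph with at least three vertices, and let f : V(K₄) → V(B) be a function such that the Sierpiński product K₄ ⊗_f B is 3-connected. Then B has no separating vertex, i.e. B is 2-connected. -/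
/-!
If `b` separates `B`, split `B - b` into two nonempty unions of components `C` and `D`. As `C` and
`D` are disjoint, one of them, say `C`, contains `f a` for at most two of the four indices `a`.
Pick `a` with `f a ∈ C` (or anywhere if there are none). In the copy `{a} × B`, the part
`{a} × C` can leave only through `(a, b)` or through the bridges `(a, f a') — (a', f a)` with
`f a' ∈ C`; deleting `(a, b)` and the at most one other endpoint `(a', f a)` therefore cuts it off,
which contradicts 3-connectivity.
-/

open SimpleGraph Set

section Shore

variable {V : Type*}

/-- `C` is a union of connected components of `G - v`. -/
def IsShore (G : SimpleGraph V) (v : V) (C : Set V) : Prop :=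
  v ∉ C ∧ ∀ ⦃c d⦄, c ∈ C → d ≠ v → G.Adj c d → d ∈ C

variable {G : SimpleGraph V}

lemma IsShore.compl_insert {v : V} {C : Set V} (h : IsShore G v C) :
    IsShore G v (insert v C)ᶜ := by
  refine ⟨by simp, fun c d hc hdv hcd hd => hc ?_⟩
  have hdC : d ∈ C := (mem_insert_iff.mp hd).resolve_left hdv
  exact mem_insert_of_mem v (h.2 hdC (fun hcv => hc (hcv ▸ mem_insert v C)) hcd.symm)

lemma exists_isShore_of_isSeparatingVertex {v w : V} (hv : IsSeparatingVertex G v)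
    (hwv : w ≠ v) : ∃ C, IsShore G v C ∧ C.Nonempty ∧ (insert v C)ᶜ.Nonempty := by
  have : Nonempty ({v}ᶜ : Set V) := ⟨⟨w, hwv⟩⟩
  have hpre : ¬ (G.induce {v}ᶜ).Preconnected := fun h => hv ⟨h⟩
  obtain ⟨x, y, hxy⟩ : ∃ x y, ¬ (G.induce {v}ᶜ).Reachable x y := by
    simpa only [Preconnected, not_forall] using hpre
  refine ⟨Subtype.val '' {z | (G.induce {v}ᶜ).Reachable x z}, ⟨?_, ?_⟩,
    ⟨x, x, Reachable.refl _, rfl⟩, ⟨y, ?_⟩⟩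
  · rintro ⟨z, -, hz⟩
    exact z.2 hz
  · rintro c d ⟨c', hc', rfl⟩ hdv hcd
    exact ⟨⟨d, hdv⟩, hc'.trans (Adj.reachable (G := G.induce {v}ᶜ) hcd), rfl⟩
  · rintro (hy | ⟨z, hz, hzy⟩)
    · exact y.2 hy
    · exact hxy (Subtype.ext hzy ▸ hz)

end Shore

lemma SimpleGraph.not_preconnected_of_adj_closed {V : Type*} {G : SimpleGraph V} {P : Set V}
    (hP : ∀ ⦃x y⦄, G.Adj x y → x ∈ P → y ∈ P) {x y : V} (hx : x ∈ P) (hy : y ∉ P) :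
    ¬ G.Preconnected := fun h =>
  let ⟨d, _, hd, hd'⟩ := (h x y).some.exists_boundary_dart P hx hy
  hd' (hP d.adj hd)

section Sierpinski

variable {α β : Type*}

def sierpinskiCut (f : α → β) (a : α) (b : β) (T : Set α) : Set (α × β) :=
  insert (a, b) ((·, f a) '' (T \ {a}))

lemma ncard_sierpinskiCut_le [Finite α] (f : α → β) (a : α) (b : β) (T : Set α) :
    (sierpinskiCut f a b T).ncard ≤ (insert a T).ncard :=
  calc (sierpinskiCut f a b T).ncard ≤ ((·, f a) '' (T \ {a})).ncard + 1 := ncard_insert_le _ _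
    _ ≤ (T \ {a}).ncard + 1 := by gcongr; exact ncard_image_le
    _ = (insert a T).ncard := by rw [← insert_sdiff_singleton, ncard_insert_of_notMem (by simp)]

lemma not_connected_induce_compl_sierpinskiCut (A : SimpleGraph α) {B : SimpleGraph β}
    (f : α → β) {b : β} {C : Set β} (hC : IsShore B b C) (hCne : C.Nonempty) {a a' : α}
    (ha' : a' ∉ insert a (f ⁻¹' C)) :
    ¬ ((SierpinskiProd A B f).induce (sierpinskiCut f a b (f ⁻¹' C))ᶜ).Connected := by
  obtain ⟨c, hc⟩ := hCne
  obtain ⟨ha'a, ha'C⟩ : a' ≠ a ∧ f a' ∉ C := by simpa using ha'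
  refine fun hconn => not_preconnected_of_adj_closed (P := {x | x.1.1 = a ∧ x.1.2 ∈ C}) ?_
    (x := ⟨(a, c), ?_⟩) (y := ⟨(a', b), ?_⟩) ⟨rfl, hc⟩ (fun h => hC.1 h.2) hconn.preconnected
  · rintro ⟨⟨x₁, x₂⟩, hx⟩ ⟨⟨y₁, y₂⟩, hy⟩ hxy ⟨hx₁ : x₁ = a, hx₂ : x₂ ∈ C⟩
    subst hx₁
    change (SierpinskiProd A B f).Adj (x₁, x₂) (y₁, y₂) at hxy
    rcases hxy with ⟨rfl : x₁ = y₁, hxy⟩ | ⟨hxy, rfl : x₂ = f y₁, rfl : y₂ = f x₁⟩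
    · exact ⟨rfl, hC.2 hx₂ (fun hy₂ : y₂ = b => hy (hy₂ ▸ mem_insert _ _)) hxy⟩
    · exact (hy (mem_insert_of_mem _ ⟨y₁, ⟨hx₂, hxy.ne'⟩, rfl⟩)).elim
  · simpa [sierpinskiCut] using fun h : c = b => hC.1 (h ▸ hc)
  · simp [sierpinskiCut, ha'a, ha'C]

lemma exists_ncard_insert_le_max [Nonempty α] (T : Set α) :
    ∃ a, (insert a T).ncard ≤ max 1 T.ncard := by
  rcases T.eq_empty_or_nonempty with rfl | ⟨a, ha⟩
  · exact ⟨Classical.arbitrary α, by simp⟩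
  · exact ⟨a, by rw [insert_eq_of_mem ha]; exact le_max_right _ _⟩

lemma not_kConnected_three_of_isShore [Fintype α] [Fintype β] (hα : 2 < Fintype.card α)
    (A : SimpleGraph α) {B : SimpleGraph β} (f : α → β) {b : β} {C : Set β}
    (hC : IsShore B b C) (hCne : C.Nonempty) (hT : (f ⁻¹' C).ncard ≤ 2) :
    ¬ KConnected 3 (SierpinskiProd A B f) := by
  intro h3
  have : Nonempty α := Fintype.card_pos_iff.mp (by omega)
  obtain ⟨a, ha⟩ := exists_ncard_insert_le_max (f ⁻¹' C)
  have hsmall : (insert a (f ⁻¹' C)).ncard ≤ 2 := ha.trans (max_le (by norm_num) hT)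
  obtain ⟨a', ha'⟩ : ∃ a', a' ∉ insert a (f ⁻¹' C) := by
    by_contra! h
    rw [eq_univ_of_forall h, ncard_univ, Nat.card_eq_fintype_card] at hsmall
    omega
  refine not_connected_induce_compl_sierpinskiCut A f hC hCne ha' (h3.2 _ ?_)
  exact (ncard_sierpinskiCut_le f a b _).trans_lt (by omega)

end Sierpinski

lemma kConnected_two_of_forall_not_isSeparatingVertex {V : Type*} [Fintype V]
    {G : SimpleGraph V} (hG : G.Connected) (hcard : 2 < Fintype.card V)
    (h : ∀ v, ¬ IsSeparatingVertex G v) : KConnected 2 G := by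
  refine ⟨hcard, fun S hS => ?_⟩
  obtain rfl | ⟨v, rfl⟩ : S = ∅ ∨ ∃ v, S = {v} := by
    rcases Nat.lt_succ_iff_lt_or_eq.mp hS with h0 | h1
    · exact Or.inl ((ncard_eq_zero (toFinite S)).mp (Nat.lt_one_iff.mp h0))
    · exact Or.inr (ncard_eq_one.mp h1)
  · rw [compl_empty]
    exact (induceUnivIso G).connected_iff.mpr hG
  · exact not_not.mp (h v)

/-- **Proposition (part).** If `K₄ ⊗_f B` is `3`-connected, with `B` connected on at least
three vertices, then `B` has no separating vertex, i.e. `B` is `2`-connected. -/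
theorem sierpinski_K4_two_connected {β : Type*} [Fintype β]
    (B : SimpleGraph β) (hB : B.Connected) (hcardB : 3 ≤ Fintype.card β)
    (f : Fin 4 → β)
    (h3 : KConnected 3 (SierpinskiProd (SimpleGraph.completeGraph (Fin 4)) B f)) :
    (∀ b : β, ¬ IsSeparatingVertex B b) ∧ KConnected 2 B := by
  have hsep : ∀ b : β, ¬ IsSeparatingVertex B b := by
    intro b hb
    obtain ⟨w, hw⟩ := Fintype.exists_ne_of_one_lt_card (by omega) b
    obtain ⟨C, hC, hCne, hDne⟩ := exists_isShore_of_isSeparatingVertex hb hw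
    have hdisj : Disjoint (f ⁻¹' C) (f ⁻¹' (insert b C)ᶜ) :=
      (disjoint_compl_right_iff_subset.mpr (subset_insert b C)).preimage f
    have hsum : (f ⁻¹' C).ncard + (f ⁻¹' (insert b C)ᶜ).ncard ≤ 4 := by
      rw [← ncard_union_eq hdisj]
      simpa using ncard_le_card (f ⁻¹' C ∪ f ⁻¹' (insert b C)ᶜ)
    have hα : 2 < Fintype.card (Fin 4) := by decide
    rcases le_or_gt (f ⁻¹' C).ncard 2 with hT | hT
    · exact not_kConnected_three_of_isShore hα _ f hC hCne hT h3
    · exact not_kConnected_three_of_isShore hα _ f hC.compl_insert hDne (by omega) h3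
  exact ⟨hsep, kConnected_two_of_forall_not_isSeparatingVertex hB (by omega) hsep⟩
end
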